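/- arXiv:2010.02572 — 4 statements merged into one kernel-verified Lean document; each statement's English description precedes it below -/
import Mathlib

section
/- Let X be a compact subset of ℂ², let m, n be positive integers, and let π : ℂ² → ℂ² be defined by π(z, w) = (zᵐ, wⁿ). Suppose π⁻¹(X) = X₁₁ ∪ X₁₂ ∪ ... ∪ X_{mn}, where X₁₁ is compact and, setting ρ = exp(2πi/m) and τ = exp(2πi/n), X_{kl} = {(ρ^{k−1} z, τ^{l−1} w) : (z, w) ∈ X₁₁} for 1 ≤ k ≤ m, 1 ≤ l ≤ n. If R(π⁻¹(X)) = C(π⁻¹(X)), then R(X) = C(X). -/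
/-!
The group `G = μ_m × μ_n` of pairs of roots of unity acts diagonally on `ℂ²`, `π` is invariant
under it, and so is `π⁻¹(X)`. Approximate `f ∘ π` on `π⁻¹(X)` by `P / Q` and average the
approximant over `G`: the average stays within `ε` of the invariant function `f ∘ π`, and over
the common denominator `∏ g, Q ∘ g` it is a quotient of `G`-invariant polynomials. An invariant
polynomial only contains monomials `z^(m a) w^(n b)`, hence factors through `π`, and since `π`
is onto, the approximation on `π⁻¹(X)` descends to one on `X`.
-/

open Complex MvPolynomial

noncomputable section

/-- `R(K) = C(K)` for `K ⊆ ℂ²` (with `ℂ²` realized as `Fin 2 → ℂ`): every continuous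
function on `K` is a uniform limit on `K` of rational functions with poles off `K`. -/
def RatEqC (K : Set (Fin 2 → ℂ)) : Prop :=
  ∀ f : (Fin 2 → ℂ) → ℂ, ContinuousOn f K → ∀ ε : ℝ, 0 < ε →
    ∃ P Q : MvPolynomial (Fin 2) ℂ, (∀ x ∈ K, eval x Q ≠ 0) ∧
      ∀ x ∈ K, ‖f x - eval x P / eval x Q‖ < ε

theorem Fintype.sum_mul_prod_erase_mul_right {G M : Type*} [Group G] [Fintype G] [DecidableEq G]
    [CommSemiring M] (a b : G → M) (w : G) :
    ∑ g, a (g * w) * ∏ h ∈ Finset.univ.erase g, b (h * w) =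
      ∑ g, a g * ∏ h ∈ Finset.univ.erase g, b h := by
  refine Fintype.sum_equiv (Equiv.mulRight w) _ _ fun g => ?_
  congr 1
  exact Finset.prod_equiv (Equiv.mulRight w) (by simp) (by simp)

theorem Finset.sum_mul_prod_erase_div_prod {ι K : Type*} [DecidableEq ι] [Semifield K]
    (s : Finset ι) (a b : ι → K) (hb : ∀ i ∈ s, b i ≠ 0) :
    (∑ i ∈ s, a i * ∏ j ∈ s.erase i, b j) / ∏ i ∈ s, b i = ∑ i ∈ s, a i / b i := by
  rw [Finset.sum_div]
  refine Finset.sum_congr rfl fun i hi => ?_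
  rw [← Finset.mul_prod_erase s b hi]
  exact mul_div_mul_right _ _ (Finset.prod_ne_zero_iff.mpr fun j hj => hb j (mem_of_mem_erase hj))

theorem norm_sub_inv_card_mul_sum_lt {ι 𝕜 : Type*} [RCLike 𝕜] {s : Finset ι} (hs : s.Nonempty)
    {z : 𝕜} {w : ι → 𝕜} {ε : ℝ} (h : ∀ i ∈ s, ‖z - w i‖ < ε) :
    ‖z - (s.card : 𝕜)⁻¹ * ∑ i ∈ s, w i‖ < ε := by
  have hcard : (s.card : 𝕜) ≠ 0 := Nat.cast_ne_zero.mpr hs.card_pos.ne'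
  have hsum : ∑ i ∈ s, ‖z - w i‖ < s.card * ε :=
    (Finset.sum_lt_sum_of_nonempty hs h).trans_eq (by simp)
  have hcenter : z - (s.card : 𝕜)⁻¹ * ∑ i ∈ s, w i = (s.card : 𝕜)⁻¹ * ∑ i ∈ s, (z - w i) := by
    rw [Finset.sum_sub_distrib, Finset.sum_const, nsmul_eq_mul, mul_sub,
      inv_mul_cancel_left₀ hcard]
  calc ‖z - (s.card : 𝕜)⁻¹ * ∑ i ∈ s, w i‖ = (s.card : ℝ)⁻¹ * ‖∑ i ∈ s, (z - w i)‖ := by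
        rw [hcenter, norm_mul, norm_inv, RCLike.norm_natCast]
    _ < (s.card : ℝ)⁻¹ * (s.card * ε) := by
        gcongr
        exact (norm_sum_le _ _).trans_lt hsum
    _ = ε := by field_simp [hs.card_pos.ne']

namespace MvPolynomial

section Scale

variable {R σ : Type*} [CommSemiring R]

def scale (c : σ → R) : MvPolynomial σ R →ₐ[R] MvPolynomial σ R :=
  aeval fun i => C (c i) * X i

theorem eval_scale (c x : σ → R) (p : MvPolynomial σ R) :
    eval x (scale c p) = eval (c * x) p := by
  induction p using MvPolynomial.induction_on <;> simp_all [scale]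

theorem scale_monomial (c : σ → R) (d : σ →₀ ℕ) (a : R) :
    scale c (monomial d a) = monomial d ((d.prod fun i k => c i ^ k) * a) := by
  rw [scale, aeval_monomial, monomial_eq]
  simp only [mul_pow, Finsupp.prod_mul, ← map_pow, algebraMap_eq, map_finsuppProd, C_mul]
  ring

theorem coeff_scale (c : σ → R) (p : MvPolynomial σ R) (d : σ →₀ ℕ) :
    coeff d (scale c p) = (d.prod fun i k => c i ^ k) * coeff d p := by
  classical
  induction p using induction_on' with
  | monomial u a =>
    rw [scale_monomial, coeff_monomial, coeff_monomial]
    split_ifs with h <;> simp [h]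
  | add p q hp hq => rw [map_add, coeff_add, coeff_add, hp, hq, mul_add]

theorem prod_pow_eq_one_of_eval_mul_eq {R : Type*} [CommRing R] [IsDomain R] [Infinite R]
    {c : σ → R} {p : MvPolynomial σ R} (h : ∀ x, eval (c * x) p = eval x p)
    {d : σ →₀ ℕ} (hd : d ∈ p.support) : (d.prod fun i k => c i ^ k) = 1 := by
  have hscale : scale c p = p := funext fun x => by rw [eval_scale, h]
  have hcoeff := congrArg (coeff d) hscale
  rw [coeff_scale] at hcoeff
  exact mul_right_cancel₀ (mem_support_iff.mp hd) (hcoeff.trans (one_mul _).symm)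

theorem dvd_of_eval_mulSingle_mul_eq {R : Type*} [CommRing R] [IsDomain R] [Infinite R]
    [DecidableEq σ] {i : σ} {ζ : R} {k : ℕ} (hζ : IsPrimitiveRoot ζ k) {p : MvPolynomial σ R}
    (h : ∀ x, eval (Pi.mulSingle i ζ * x) p = eval x p) {d : σ →₀ ℕ} (hd : d ∈ p.support) :
    k ∣ d i := by
  have hprod := prod_pow_eq_one_of_eval_mul_eq h hd
  rw [Finsupp.prod_eq_single i (fun j _ hj => by simp [hj]) (fun _ => by simp),
    Pi.mulSingle_eq_same] at hprod
  exact hζ.dvd_of_pow_eq_one _ hprod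

theorem exists_eval_pow_eq [Fintype σ] (e : σ → ℕ) {p : MvPolynomial σ R}
    (h : ∀ d ∈ p.support, ∀ i, e i ∣ d i) :
    ∃ q : MvPolynomial σ R, ∀ y, eval (fun i => y i ^ e i) q = eval y p := by
  refine ⟨∑ d ∈ p.support,
    monomial (Finsupp.equivFunOnFinite.symm fun i => d i / e i) (coeff d p), fun y => ?_⟩
  rw [map_sum, eval_eq']
  refine Finset.sum_congr rfl fun d hd => ?_
  rw [eval_monomial, Finsupp.prod_fintype _ _ fun i => pow_zero _]
  congr 1
  refine Finset.prod_congr rfl fun i _ => ?_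
  rw [Finsupp.coe_equivFunOnFinite_symm, ← pow_mul, Nat.mul_div_cancel' (h d hd i)]

end Scale

section Orbit

variable {G σ R : Type*} [Group G] [Fintype G] [CommRing R] (φ : G →* (σ → R))

def orbitProd (Q : MvPolynomial σ R) : MvPolynomial σ R :=
  ∏ g, scale (φ g) Q

/-- The numerator of `∑ g, (P / Q)(φ g * x)` over the common denominator `orbitProd φ Q`. -/
def orbitSumNum [DecidableEq G] (P Q : MvPolynomial σ R) : MvPolynomial σ R :=
  ∑ g, scale (φ g) P * ∏ h ∈ Finset.univ.erase g, scale (φ h) Q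

theorem eval_orbitProd (Q : MvPolynomial σ R) (x : σ → R) :
    eval x (orbitProd φ Q) = ∏ g, eval (φ g * x) Q := by
  simp [orbitProd, eval_scale]

theorem eval_orbitSumNum [DecidableEq G] (P Q : MvPolynomial σ R) (x : σ → R) :
    eval x (orbitSumNum φ P Q) =
      ∑ g, eval (φ g * x) P * ∏ h ∈ Finset.univ.erase g, eval (φ h * x) Q := by
  simp [orbitSumNum, eval_scale]

theorem eval_mul_orbitProd (Q : MvPolynomial σ R) (w : G) (x : σ → R) :
    eval (φ w * x) (orbitProd φ Q) = eval x (orbitProd φ Q) := by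
  simp only [eval_orbitProd, ← mul_assoc, ← map_mul]
  exact Fintype.prod_equiv (Equiv.mulRight w) _ _ fun _ => rfl

theorem eval_mul_orbitSumNum [DecidableEq G] (P Q : MvPolynomial σ R) (w : G) (x : σ → R) :
    eval (φ w * x) (orbitSumNum φ P Q) = eval x (orbitSumNum φ P Q) := by
  simp only [eval_orbitSumNum, ← mul_assoc, ← map_mul]
  exact Fintype.sum_mul_prod_erase_mul_right (fun g => eval (φ g * x) P)
    (fun g => eval (φ g * x) Q) w

end Orbit

theorem exists_invariant_approx {G σ 𝕜 : Type*} [Group G] [Fintype G] [RCLike 𝕜]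
    (φ : G →* (σ → 𝕜)) {K : Set (σ → 𝕜)} (hK : ∀ g, ∀ x ∈ K, φ g * x ∈ K)
    {F : (σ → 𝕜) → 𝕜} (hF : ∀ g, ∀ x ∈ K, F (φ g * x) = F x) {P Q : MvPolynomial σ 𝕜}
    (hQ : ∀ x ∈ K, eval x Q ≠ 0) {ε : ℝ} (happrox : ∀ x ∈ K, ‖F x - eval x P / eval x Q‖ < ε) :
    ∃ P' Q' : MvPolynomial σ 𝕜, (∀ g x, eval (φ g * x) P' = eval x P') ∧
      (∀ g x, eval (φ g * x) Q' = eval x Q') ∧ (∀ x ∈ K, eval x Q' ≠ 0) ∧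
      ∀ x ∈ K, ‖F x - eval x P' / eval x Q'‖ < ε := by
  classical
  refine ⟨C (Fintype.card G : 𝕜)⁻¹ * orbitSumNum φ P Q, orbitProd φ Q, fun g x => ?_,
    fun g x => eval_mul_orbitProd φ Q g x, fun x hx => ?_, fun x hx => ?_⟩
  · rw [map_mul, map_mul, eval_C, eval_C, eval_mul_orbitSumNum]
  · rw [eval_orbitProd]
    exact Finset.prod_ne_zero_iff.mpr fun g _ => hQ _ (hK g x hx)
  · have hQx : ∀ g ∈ Finset.univ, eval (φ g * x) Q ≠ 0 := fun g _ => hQ _ (hK g x hx)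
    rw [map_mul, eval_C, mul_div_assoc, eval_orbitSumNum, eval_orbitProd,
      Finset.sum_mul_prod_erase_div_prod _ _ _ hQx, ← Finset.card_univ]
    refine norm_sub_inv_card_mul_sum_lt Finset.univ_nonempty fun g _ => ?_
    rw [← hF g x hx]
    exact happrox _ (hK g x hx)

end MvPolynomial

section RootsOfUnity

variable {σ : Type*} (R : Type*) [CommRing R]

def rootsOfUnityDiag (e : σ → ℕ) : (∀ i, rootsOfUnity (e i) R) →* (σ → R) :=
  MonoidHom.pi fun i =>
    (Units.coeHom R).comp ((rootsOfUnity (e i) R).subtype.comp (Pi.evalMonoidHom _ i))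

variable {R}

@[simp]
theorem rootsOfUnityDiag_apply (e : σ → ℕ) (g : ∀ i, rootsOfUnity (e i) R) (i : σ) :
    rootsOfUnityDiag R e g i = ((g i : Rˣ) : R) :=
  rfl

theorem pow_rootsOfUnityDiag_mul (e : σ → ℕ) (g : ∀ i, rootsOfUnity (e i) R) (y : σ → R) :
    (fun i => (rootsOfUnityDiag R e g * y) i ^ e i) = fun i => y i ^ e i := by
  funext i
  rw [Pi.mul_apply, mul_pow, rootsOfUnityDiag_apply, (mem_rootsOfUnity' _ _).mp (g i).2, one_mul]

theorem MvPolynomial.exists_eval_pow_eq_of_invariant [Fintype σ] [IsDomain R] [Infinite R]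
    {e : σ → ℕ} [∀ i, NeZero (e i)] {ζ : σ → R} (hζ : ∀ i, IsPrimitiveRoot (ζ i) (e i))
    {p : MvPolynomial σ R} (hp : ∀ g x, eval (rootsOfUnityDiag R e g * x) p = eval x p) :
    ∃ q : MvPolynomial σ R, ∀ y, eval (fun i => y i ^ e i) q = eval y p := by
  classical
  refine exists_eval_pow_eq e fun d hd i => dvd_of_eval_mulSingle_mul_eq (hζ i) (fun x => ?_) hd
  have hdiag :
      rootsOfUnityDiag R e (Pi.mulSingle i (hζ i).toRootsOfUnity) = Pi.mulSingle i (ζ i) := by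
    funext j
    by_cases hj : j = i
    · subst hj; simp
    · simp [hj]
  rw [← hdiag, hp]

end RootsOfUnity

theorem Function.surjective_pi_pow {σ K : Type*} [Field K] [IsAlgClosed K] (e : σ → ℕ)
    [∀ i, NeZero (e i)] : Function.Surjective fun (y : σ → K) i => y i ^ e i := by
  intro x
  choose y hy using fun i => IsAlgClosed.exists_pow_nat_eq (x i) (NeZero.pos (e i))
  exact ⟨y, funext hy⟩

theorem stmt3_general (X : Set (Fin 2 → ℂ)) (m n : ℕ) (hm : 0 < m) (hn : 0 < n)
    (π : (Fin 2 → ℂ) → (Fin 2 → ℂ)) (hπ : π = fun p => ![p 0 ^ m, p 1 ^ n])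
    (hR : RatEqC (π ⁻¹' X)) :
    RatEqC X := by
  set e : Fin 2 → ℕ := ![m, n]
  have : ∀ i, NeZero (e i) := Fin.forall_fin_two.mpr ⟨⟨hm.ne'⟩, ⟨hn.ne'⟩⟩
  have : Fintype (∀ i, rootsOfUnity (e i) ℂ) := Fintype.ofFinite _
  replace hπ : π = fun y i => y i ^ e i := by
    subst hπ; funext y i; fin_cases i <;> rfl
  have hπinv g y : π (rootsOfUnityDiag ℂ e g * y) = π y := by
    rw [hπ]; exact pow_rootsOfUnityDiag_mul e g y
  have hζ i := isPrimitiveRoot_exp (e i) (NeZero.ne _)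
  intro f hf ε hε
  obtain ⟨P, Q, hQ, happrox⟩ :=
    hR (f ∘ π) (hf.comp (hπ ▸ by fun_prop) (Set.mapsTo_preimage _ X)) ε hε
  obtain ⟨P', Q', hP'inv, hQ'inv, hQ', happrox'⟩ := exists_invariant_approx (rootsOfUnityDiag ℂ e)
    (fun g x hx => by rwa [Set.mem_preimage, hπinv])
    (fun g x _ => by simp only [Function.comp_apply, hπinv]) hQ happrox
  obtain ⟨P₂, hP₂⟩ := exists_eval_pow_eq_of_invariant hζ hP'inv
  obtain ⟨Q₂, hQ₂⟩ := exists_eval_pow_eq_of_invariant hζ hQ'inv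
  subst hπ
  refine ⟨P₂, Q₂, fun x hx => ?_, fun x hx => ?_⟩ <;>
    obtain ⟨y, rfl⟩ := Function.surjective_pi_pow e x
  · rw [hQ₂]; exact hQ' y hx
  · rw [hP₂, hQ₂]; exact happrox' y hx

/-- Let `π(z,w) = (zᵐ, wⁿ)` and suppose `π⁻¹(X)` is the union of the
`m·n` rotated copies `X_{kl} = {(ρᵏ⁻¹z, τˡ⁻¹w) : (z,w) ∈ X₁₁}` of a compact set `X₁₁`,
where `ρ = exp(2πi/m)`, `τ = exp(2πi/n)`.  If `R(π⁻¹(X)) = C(π⁻¹(X))` then `R(X) = C(X)`. -/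
theorem stmt3 (X : Set (Fin 2 → ℂ)) (hX : IsCompact X) (m n : ℕ) (hm : 0 < m) (hn : 0 < n)
    (π : (Fin 2 → ℂ) → (Fin 2 → ℂ)) (hπ : π = fun p => ![p 0 ^ m, p 1 ^ n])
    (ρ τ : ℂ) (hρ : ρ = Complex.exp (2 * Real.pi * Complex.I / m))
    (hτ : τ = Complex.exp (2 * Real.pi * Complex.I / n))
    (X₁₁ : Set (Fin 2 → ℂ)) (hX₁₁ : IsCompact X₁₁)
    (hdecomp : π ⁻¹' X =
      ⋃ k ∈ Finset.range m, ⋃ l ∈ Finset.range n,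
        (fun p : Fin 2 → ℂ => ![ρ ^ k * p 0, τ ^ l * p 1]) '' X₁₁)
    (hR : RatEqC (π ⁻¹' X)) :
    RatEqC X :=
  stmt3_general X m n hm hn π hπ hR
end
end

section
/- Let D = {z ∈ ℂ : |z| ≤ r} with r > 0 sufficiently small, and set X₁ = {(z, z̄/(1+z̄)) : z ∈ D} and X₂ = {(−z, z̄/(1+z̄)) : z ∈ D}, compact subsets of ℂ². Then P(X₁) = C(X₁) and P(X₂) = C(X₂); that is, every continuous complex-valued function on Xᵢ is a uniform limit on Xᵢ of polynomials in the two complex coordinates. -/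
/-!
By Stone–Weierstrass, `P(X) = C(X)` as soon as the conjugates of both coordinate functions
lie in `P(X)`. At the point `x = (s z, w)` of `X`, with `c = z̄` and `w = c / (1 + c)`, one has
`(1 - w) c = w` and `(1 + z) w̄ = z`. For `|z| ≤ r < 1/2` both `w` and `z = x₀ / s` have sup norm
less than `1` on `X`, so `x̄₀ = s̄ c` and `x̄₁` are sums of uniformly convergent Neumann series
of polynomials in the coordinates.
-/

open Complex MvPolynomial Metric

noncomputable section

/-- `P(K) = C(K)` for `K ⊆ ℂ²` (with `ℂ²` realized as `Fin 2 → ℂ`): every continuous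
function on `K` is a uniform limit on `K` of polynomials in the two coordinates. -/
def PolyEqC (K : Set (Fin 2 → ℂ)) : Prop :=
  ∀ f : (Fin 2 → ℂ) → ℂ, ContinuousOn f K → ∀ ε : ℝ, 0 < ε →
    ∃ P : MvPolynomial (Fin 2) ℂ, ∀ x ∈ K, ‖f x - eval x P‖ < ε

theorem Subalgebra.mem_topologicalClosure_of_mul_one_sub_eq {R A : Type*} [CommRing R]
    [NormedRing A] [Algebra R A] [HasSummableGeomSeries A] (S : Subalgebra R A) {g p h : A}
    (hg : g ∈ S) (hp : p ∈ S) (hg_norm : ‖g‖ < 1) (hh : h * (1 - g) = p) :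
    h ∈ S.topologicalClosure := by
  have h_eq : h = p * ∑' n, g ^ n := by
    rw [← hh, mul_assoc, mul_neg_geom_series g hg_norm, mul_one]
  rw [h_eq]
  exact S.topologicalClosure.mul_mem (S.le_topologicalClosure hp)
    (tsum_mem S.isClosed_topologicalClosure fun n => S.le_topologicalClosure (pow_mem hg n))

namespace PolynomialFunctionsOn

variable {ι : Type*} (K : Set (ι → ℂ))

def coord (i : ι) : C(K, ℂ) :=
  ⟨fun x => (x : ι → ℂ) i, (continuous_apply i).comp continuous_subtype_val⟩

@[simp]
theorem coord_apply (i : ι) (x : K) : coord K i x = (x : ι → ℂ) i := rfl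

def subalgebra : Subalgebra ℂ C(K, ℂ) := (aeval (coord K)).range

theorem coord_mem (i : ι) : coord K i ∈ subalgebra K := ⟨X i, aeval_X _ _⟩

theorem aeval_coord_apply (P : MvPolynomial ι ℂ) (x : K) :
    aeval (coord K) P x = eval (x : ι → ℂ) P := by
  induction P using MvPolynomial.induction_on <;> simp_all

theorem topologicalClosure_eq_top_of_star_coord_mem [CompactSpace K]
    (h : ∀ i, star (coord K i) ∈ (subalgebra K).topologicalClosure) :
    (subalgebra K).topologicalClosure = ⊤ := by
  let B := StarAlgebra.adjoin ℂ (Set.range (coord K))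
  have hB : B.SeparatesPoints := by
    intro x y hxy
    obtain ⟨i, hi⟩ := Function.ne_iff.mp (Subtype.coe_injective.ne hxy)
    exact ⟨_, ⟨coord K i, StarAlgebra.subset_adjoin ℂ _ ⟨i, rfl⟩, rfl⟩, hi⟩
  have hB_le : B.toSubalgebra ≤ (subalgebra K).topologicalClosure := by
    rw [StarAlgebra.adjoin_toSubalgebra]
    refine Algebra.adjoin_le ?_
    rintro g (⟨i, rfl⟩ | ⟨i, hi⟩)
    · exact (subalgebra K).le_topologicalClosure (coord_mem K i)
    · rw [← star_star g, ← hi]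
      exact h i
  refine eq_top_iff.mpr fun f _ => ?_
  have hf : f ∈ B.topologicalClosure :=
    ContinuousMap.starSubalgebra_topologicalClosure_eq_top_of_separatesPoints B hB ▸ trivial
  exact Subalgebra.topologicalClosure_minimal hB_le (subalgebra K).isClosed_topologicalClosure hf

end PolynomialFunctionsOn

theorem polyEqC_of_topologicalClosure_eq_top {K : Set (Fin 2 → ℂ)} [CompactSpace K]
    (h : (PolynomialFunctionsOn.subalgebra K).topologicalClosure = ⊤) : PolyEqC K := by
  intro f hf ε hε
  have hf_mem : (⟨K.domRestrict f, hf.domRestrict⟩ : C(K, ℂ)) ∈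
      closure (PolynomialFunctionsOn.subalgebra K : Set C(K, ℂ)) := by
    rw [← Subalgebra.topologicalClosure_coe, h]
    trivial
  obtain ⟨_, ⟨P, rfl⟩, hP⟩ := Metric.mem_closure_iff.mp hf_mem ε hε
  refine ⟨P, fun x hx => ?_⟩
  have := (ContinuousMap.dist_lt_iff hε).mp hP ⟨x, hx⟩
  rwa [AlgHom.toRingHom_eq_coe, RingHom.coe_coe, PolynomialFunctionsOn.aeval_coord_apply,
    dist_eq_norm] at this

theorem one_add_ne_zero_of_norm_lt_one {𝕜 : Type*} [NormedDivisionRing 𝕜] {c : 𝕜}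
    (hc : ‖c‖ < 1) : 1 + c ≠ 0 := by
  intro h
  rw [eq_neg_of_add_eq_zero_right h, norm_neg, norm_one] at hc
  exact hc.false

theorem norm_div_one_add_lt_one {𝕜 : Type*} [NormedDivisionRing 𝕜] {c : 𝕜}
    (hc : ‖c‖ < 1 / 2) : ‖c / (1 + c)‖ < 1 := by
  have h : 1 - ‖c‖ ≤ ‖1 + c‖ := by simpa using norm_sub_norm_le (1 : 𝕜) (-c)
  rw [norm_div, div_lt_one (by linarith)]
  linarith

def diskMap (s z : ℂ) : Fin 2 → ℂ := ![s * z, starRingEnd ℂ z / (1 + starRingEnd ℂ z)]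

/-- The sets `X₁` and `X₂` are `diskImage 1 r` and `diskImage (-1) r`. -/
def diskImage (s : ℂ) (r : ℝ) : Set (Fin 2 → ℂ) := diskMap s '' closedBall 0 r

section DiskImage

open PolynomialFunctionsOn

variable {s : ℂ} {r : ℝ}

theorem isCompact_diskImage (s : ℂ) (hr : r < 1) : IsCompact (diskImage s r) := by
  refine (isCompact_closedBall 0 r).image_of_continuousOn (continuousOn_pi.mpr fun i => ?_)
  fin_cases i
  · exact (continuous_const_mul s).continuousOn
  · refine continuous_conj.continuousOn.div (continuous_const.add continuous_conj).continuousOn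
      fun z hz => one_add_ne_zero_of_norm_lt_one ?_
    rw [RCLike.norm_conj]
    exact (mem_closedBall_zero_iff.mp hz).trans_lt hr

theorem star_coord_zero_mul_one_sub (hr : r < 1) :
    star (coord (diskImage s r) 0) * (1 - coord (diskImage s r) 1) =
      starRingEnd ℂ s • coord (diskImage s r) 1 := by
  ext ⟨_, z, hz, rfl⟩
  set c := starRingEnd ℂ z
  have hc : 1 + c ≠ 0 := one_add_ne_zero_of_norm_lt_one <| by
    rw [RCLike.norm_conj]; exact (mem_closedBall_zero_iff.mp hz).trans_lt hr
  have key : starRingEnd ℂ s * c * (1 - c / (1 + c)) = starRingEnd ℂ s * (c / (1 + c)) := by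
    field_simp
    ring
  simpa [diskMap] using key

theorem star_coord_one_mul_one_sub (hs : s ≠ 0) (hr : r < 1) :
    star (coord (diskImage s r) 1) * (1 - (-s⁻¹) • coord (diskImage s r) 0) =
      s⁻¹ • coord (diskImage s r) 0 := by
  ext ⟨_, z, hz, rfl⟩
  have hz1 : 1 + z ≠ 0 := one_add_ne_zero_of_norm_lt_one <|
    (mem_closedBall_zero_iff.mp hz).trans_lt hr
  have key : z / (1 + z) * (1 + s⁻¹ * (s * z)) = s⁻¹ * (s * z) := by
    field_simp
  simpa [diskMap] using key

theorem norm_coord_one_lt_one [CompactSpace (diskImage s r)] (hr : r < 1 / 2) :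
    ‖coord (diskImage s r) 1‖ < 1 := by
  refine (ContinuousMap.norm_lt_iff _ one_pos).mpr fun ⟨_, z, hz, rfl⟩ => ?_
  refine norm_div_one_add_lt_one ?_
  rw [RCLike.norm_conj]
  exact (mem_closedBall_zero_iff.mp hz).trans_lt hr

theorem norm_smul_coord_zero_lt_one [CompactSpace (diskImage s r)] (hs : s ≠ 0) (hr : r < 1) :
    ‖(-s⁻¹) • coord (diskImage s r) 0‖ < 1 := by
  refine (ContinuousMap.norm_lt_iff _ one_pos).mpr fun ⟨_, z, hz, rfl⟩ => ?_
  simpa [diskMap, hs] using (mem_closedBall_zero_iff.mp hz).trans_lt hr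

theorem polyEqC_diskImage (hs : s ≠ 0) (hr : r < 1 / 2) : PolyEqC (diskImage s r) := by
  have hr1 : r < 1 := hr.trans (by norm_num)
  have := isCompact_iff_compactSpace.mp (isCompact_diskImage s hr1)
  set S := subalgebra (diskImage s r)
  refine polyEqC_of_topologicalClosure_eq_top
    (topologicalClosure_eq_top_of_star_coord_mem _ fun i => ?_)
  fin_cases i
  · exact S.mem_topologicalClosure_of_mul_one_sub_eq (coord_mem _ 1)
      (S.smul_mem (coord_mem _ 1) _) (norm_coord_one_lt_one hr) (star_coord_zero_mul_one_sub hr1)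
  · exact S.mem_topologicalClosure_of_mul_one_sub_eq (S.smul_mem (coord_mem _ 0) _)
      (S.smul_mem (coord_mem _ 0) _) (norm_smul_coord_zero_lt_one hs hr1)
      (star_coord_one_mul_one_sub hs hr1)

end DiskImage

/-- For `D` a sufficiently small closed disk centered at the origin and
`X₁ = {(z, z̄/(1+z̄)) : z ∈ D}`, `X₂ = {(−z, z̄/(1+z̄)) : z ∈ D}`, one has
`P(X₁) = C(X₁)` and `P(X₂) = C(X₂)`. -/
theorem stmt7 :
    ∃ r₀ : ℝ, 0 < r₀ ∧ ∀ r : ℝ, 0 < r → r ≤ r₀ →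
      PolyEqC ((fun z : ℂ => ![z, (starRingEnd ℂ) z / (1 + (starRingEnd ℂ) z)]) ''
          closedBall (0 : ℂ) r) ∧
      PolyEqC ((fun z : ℂ => ![-z, (starRingEnd ℂ) z / (1 + (starRingEnd ℂ) z)]) ''
          closedBall (0 : ℂ) r) := by
  refine ⟨1 / 4, by norm_num, fun r _ hr => ⟨?_, ?_⟩⟩
  · have h := polyEqC_diskImage one_ne_zero (r := r) (by linarith)
    unfold diskImage diskMap at h
    simpa using h
  · have h := polyEqC_diskImage (neg_ne_zero.mpr one_ne_zero) (r := r) (by linarith)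
    unfold diskImage diskMap at h
    simpa using h
end
end

section
/- Let D = {z ∈ ℂ : |z| ≤ r} with 0 < r < 1, let X₁ = {(z, z̄/(1+z̄)) : z ∈ D}, X₂ = {(−z, z̄/(1+z̄)) : z ∈ D}, and let p(u, v) = uv/(1+u). Then {(u, v) ∈ X₁ ∪ X₂ : p(u, v) = 0} = {(0, 0)} and X₁ ∩ X₂ = {(0, 0)}; in particular p⁻¹(0) ∩ (X₁ ∪ X₂) = X₁ ∩ X₂. -/
open Complex Metric

noncomputable section

/-- The rational function `p(u,v) = uv/(1+u)` on `ℂ²`. -/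
def pfun (q : ℂ × ℂ) : ℂ := q.1 * q.2 / (1 + q.1)

private lemma aux_ne (z : ℂ) (h : ‖z‖ < 1) : 1 + z ≠ 0 := by
  intro h0
  have hz : z = -1 := by linear_combination h0
  rw [hz] at h
  simp at h

/-- For `D = {|z| ≤ r}` with `0 < r < 1`,
`X₁ = {(z, z̄/(1+z̄)) : z ∈ D}`, `X₂ = {(−z, z̄/(1+z̄)) : z ∈ D}` and `p(u,v) = uv/(1+u)`,
the zero set of `p` on `X₁ ∪ X₂` is `{(0,0)}` and `X₁ ∩ X₂ = {(0,0)}`; in particular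
`p⁻¹(0) ∩ (X₁ ∪ X₂) = X₁ ∩ X₂`. -/
theorem stmt9 (r : ℝ) (hr0 : 0 < r) (hr1 : r < 1)
    (X₁ X₂ : Set (ℂ × ℂ))
    (hX₁ : X₁ = (fun z : ℂ => (z, (starRingEnd ℂ) z / (1 + (starRingEnd ℂ) z))) ''
        closedBall (0 : ℂ) r)
    (hX₂ : X₂ = (fun z : ℂ => (-z, (starRingEnd ℂ) z / (1 + (starRingEnd ℂ) z))) ''
        closedBall (0 : ℂ) r) :
    {q ∈ X₁ ∪ X₂ | pfun q = 0} = {((0 : ℂ), (0 : ℂ))} ∧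
    X₁ ∩ X₂ = {((0 : ℂ), (0 : ℂ))} := by
  have hlt : ∀ z : ℂ, z ∈ closedBall (0 : ℂ) r → ‖z‖ < 1 := by
    intro z hz
    have : ‖z‖ ≤ r := by simpa using hz
    linarith
  have hltc : ∀ z : ℂ, ‖z‖ < 1 → ‖(starRingEnd ℂ) z‖ < 1 := by
    intro z hz; simpa using hz
  have hzero : (0 : ℂ) ∈ closedBall (0 : ℂ) r := by
    simp [hr0.le]
  constructor
  · ext q
    simp only [Set.mem_setOf_eq, Set.mem_union, Set.mem_singleton_iff, hX₁, hX₂,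
      Set.mem_image]
    constructor
    · rintro ⟨(⟨z, hz, rfl⟩ | ⟨z, hz, rfl⟩), hp⟩ <;>
      · have h1 : ‖z‖ < 1 := hlt z hz
        have hc := aux_ne _ (hltc z h1)
        simp only [pfun, div_eq_zero_iff] at hp
        have hz0 : z = 0 := by
          rcases hp with hp | hp
          · have := aux_ne z h1
            have := aux_ne (-z) (by simpa using h1)
            rcases mul_eq_zero.1 hp with h | h
            · simpa using h
            · rcases div_eq_zero_iff.1 h with h | h
              · have : z = 0 := by
                  have := congrArg (starRingEnd ℂ) h
                  simpa using this
                exact this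
              · exact absurd h hc
          · first
            | exact absurd hp (aux_ne z h1)
            | exact absurd hp (by simpa [sub_eq_add_neg] using aux_ne (-z) (by simpa using h1))
        simp [hz0]
    · rintro rfl
      refine ⟨Or.inl ⟨0, hzero, by simp⟩, by simp [pfun]⟩
  · ext q
    simp only [Set.mem_inter_iff, Set.mem_singleton_iff, hX₁, hX₂, Set.mem_image]
    constructor
    · rintro ⟨⟨z, hz, rfl⟩, ⟨w, hw, hq⟩⟩
      have h1 : ‖z‖ < 1 := hlt z hz
      have h2 : ‖w‖ < 1 := hlt w hw
      have hcz := aux_ne _ (hltc z h1)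
      have hcw := aux_ne _ (hltc w h2)
      have h1eq : z = -w := (Prod.ext_iff.1 hq.symm).1
      have h2eq : (starRingEnd ℂ) w / (1 + (starRingEnd ℂ) w)
          = (starRingEnd ℂ) z / (1 + (starRingEnd ℂ) z) := (Prod.ext_iff.1 hq).2
      rw [div_eq_div_iff hcw hcz] at h2eq
      have hcwz : (starRingEnd ℂ) w = (starRingEnd ℂ) z := by linear_combination h2eq
      have hwz : w = z := by
        have := congrArg (starRingEnd ℂ) hcwz; simpa using this
      have hz0 : z = 0 := by
        rw [hwz] at h1eq
        have : (2 : ℂ) * z = 0 := by linear_combination h1eq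
        simpa using this
      simp [hz0]
    · rintro rfl
      exact ⟨⟨0, hzero, by simp⟩, ⟨0, hzero, by simp⟩⟩
end
end

section
/- Let D = {z ∈ ℂ : |z| ≤ r} with r > 0 sufficiently small, and let X = {(z², z̄/(1+z̄)) : z ∈ D} ⊂ ℂ². Then R(X) = C(X): every continuous complex-valued function on X can be uniformly approximated on X by rational functions with poles off X. In particular, X is rationally convex. -/
/-!
Pulled back along `Φ z = (z², z̄ / (1 + z̄))`, the rational functions with poles off `X` form a
subalgebra of `C(D)` containing `z²` and `z̄ = w / (1 - w)`, where `w = z̄ / (1 + z̄)`. With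
`s = |z|² / r²`, the Newton iteration `p ↦ p (3 - p²) / 2` started at `p = s` yields odd
polynomials `pₖ(s)` tending to `1` on `(0, 1]`, so `z pₖ(s)`, a polynomial in `z² z̄` and
`z² z̄²`, tends to `z` uniformly on `D`. The closure then contains `z` and `z̄`, hence is all of
`C(D)` by Stone–Weierstrass, and `R(X) = C(X)` follows by composing with `Φ`.

For rational convexity, let `w ∉ X`: approximating the Bézout coefficients
`conj (xᵢ - wᵢ) / |x - w|²` by rational functions and clearing denominators gives a polynomial
`Q` vanishing at `w` but not on `X`, and `1 / (Q + δ / 3)`, with `δ = min_X |Q|`, violates the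
hull inequality at `w`.
-/

open Complex MvPolynomial Metric

noncomputable section

/-- The rationally convex hull of `K ⊆ ℂ²`. -/
def RHull (K : Set (Fin 2 → ℂ)) : Set (Fin 2 → ℂ) :=
  {z | ∀ P Q : MvPolynomial (Fin 2) ℂ, (∀ x ∈ K ∪ {z}, eval x Q ≠ 0) →
    ‖eval z P / eval z Q‖ ≤ sSup ((fun w => ‖eval w P / eval w Q‖) '' K)}

open ComplexConjugate

def newtonSign : ℕ → ℝ → ℝ
  | 0, s => s
  | k + 1, s => newtonSign k s * (3 - newtonSign k s ^ 2) / 2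

lemma newtonSign_bounds {s : ℝ} (h0 : 0 ≤ s) (h1 : s ≤ 1) (k : ℕ) :
    s ≤ newtonSign k s ∧ newtonSign k s ≤ 1 ∧ 1 - newtonSign k s ≤ (1 - s / 2) ^ k := by
  induction k with
  | zero => exact ⟨le_rfl, h1, by simp [newtonSign]; linarith⟩
  | succ k ih =>
    obtain ⟨hs, hp1, herr⟩ := ih
    set p := newtonSign k s
    simp only [newtonSign]
    refine ⟨by nlinarith, by nlinarith [sq_nonneg (1 - p)], ?_⟩
    -- `1 - p (3 - p²) / 2 = (1 - p)² (2 + p) / 2 ≤ (1 - p) (1 - s / 2)` since `s ≤ p ≤ 1`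
    calc 1 - p * (3 - p ^ 2) / 2 ≤ (1 - p) * (1 - s / 2) := by nlinarith [sq_nonneg (1 - p)]
      _ ≤ (1 - s / 2) ^ k * (1 - s / 2) := by gcongr; linarith
      _ = (1 - s / 2) ^ (k + 1) := (pow_succ _ _).symm

section NewtonIteration

variable {K : Type*} [TopologicalSpace K] (S : Subalgebra ℂ C(K, ℂ)) {f : C(K, ℂ)} {s : K → ℝ}

lemma exists_mem_mul_newtonSign (hu : ∃ u ∈ S, ∀ x, u x = f x * s x)
    (hv : ∃ v ∈ S, ∀ x, v x = (s x : ℂ) ^ 2) (k : ℕ) :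
    (∃ u ∈ S, ∀ x, u x = f x * newtonSign k (s x)) ∧
      ∃ v ∈ S, ∀ x, v x = (newtonSign k (s x) : ℂ) ^ 2 := by
  induction k with
  | zero => exact ⟨hu, hv⟩
  | succ k ih =>
    obtain ⟨⟨u, hu, hux⟩, ⟨v, hv, hvx⟩⟩ := ih
    set w := algebraMap ℂ C(K, ℂ) 3 - v
    have hw : w ∈ S := sub_mem (S.algebraMap_mem 3) hv
    refine ⟨⟨(2⁻¹ : ℂ) • (u * w), S.smul_mem (mul_mem hu hw) _, fun x => ?_⟩,
      ⟨(4⁻¹ : ℂ) • (v * w ^ 2), S.smul_mem (mul_mem hv (pow_mem hw 2)) _, fun x => ?_⟩⟩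
    all_goals
      simp [w, newtonSign, hux, hvx]
      ring

lemma mem_topologicalClosure_of_newtonSign [CompactSpace K] (hs : ∀ x, s x ∈ Set.Icc 0 1)
    (hu : ∃ u ∈ S, ∀ x, u x = f x * s x) (hv : ∃ v ∈ S, ∀ x, v x = (s x : ℂ) ^ 2)
    (hf : ∀ ε > 0, ∃ c > 0, ∀ x, s x < c → ‖f x‖ < ε) :
    f ∈ S.topologicalClosure := by
  rw [← SetLike.mem_coe, Subalgebra.topologicalClosure_coe, Metric.mem_closure_iff]
  intro ε hε
  obtain ⟨c, hc, hfc⟩ := hf (ε / 2) (half_pos hε)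
  obtain ⟨k, hk⟩ := exists_pow_lt_of_lt_one (show 0 < ε / 2 / (‖f‖ + 1) by positivity)
    (show 1 - min c 1 / 2 < 1 by linarith [lt_min hc one_pos])
  obtain ⟨⟨u, hu, hux⟩, -⟩ := exists_mem_mul_newtonSign S hu hv k
  refine ⟨u, hu, (ContinuousMap.dist_lt_iff hε).2 fun x => ?_⟩
  obtain ⟨hs0, hs1⟩ := hs x
  obtain ⟨hsp, hp1, herr⟩ := newtonSign_bounds hs0 hs1 k
  have hdist : dist (f x) (u x) = ‖f x‖ * (1 - newtonSign k (s x)) := by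
    rw [hux, dist_eq_norm, ← mul_one_sub, norm_mul, ← ofReal_one, ← ofReal_sub, norm_real,
      Real.norm_of_nonneg (by linarith)]
  rw [hdist]
  rcases lt_or_ge (s x) c with hsc | hsc
  · calc ‖f x‖ * (1 - newtonSign k (s x)) ≤ ‖f x‖ * 1 := by gcongr; linarith
      _ < ε := by linarith [hfc x hsc]
  · calc ‖f x‖ * (1 - newtonSign k (s x)) ≤ (‖f‖ + 1) * (1 - min c 1 / 2) ^ k := by
          gcongr
          · linarith [f.norm_coe_le_norm x]
          · exact herr.trans (pow_le_pow_left₀ (by linarith) (by linarith [min_le_left c 1]) k)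
      _ < (‖f‖ + 1) * (ε / 2 / (‖f‖ + 1)) := by gcongr
      _ < ε := by rw [mul_div_cancel₀ _ (by positivity)]; linarith

end NewtonIteration

lemma Subalgebra.topologicalClosure_eq_top_of_id_mem {𝕜 : Type*} [RCLike 𝕜] {s : Set 𝕜}
    [CompactSpace s] (S : Subalgebra 𝕜 C(s, 𝕜))
    (hid : .restrict s (.id 𝕜) ∈ S.topologicalClosure)
    (hstar : star (.restrict s (.id 𝕜)) ∈ S.topologicalClosure) :
    S.topologicalClosure = ⊤ := by
  refine Algebra.eq_top_iff.2 fun f => ?_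
  induction f using ContinuousMap.induction_on_of_compact with
  | const r => exact S.topologicalClosure.algebraMap_mem r
  | id => exact hid
  | star_id => exact hstar
  | add f g hf hg => exact add_mem hf hg
  | mul f g hf hg => exact mul_mem hf hg
  | frequently f hf => exact isClosed_iff_frequently.1 S.isClosed_topologicalClosure f hf

def ratFunctionsOf {K σ : Type*} [TopologicalSpace K] (φ : K → σ → ℂ) :
    Subalgebra ℂ C(K, ℂ) where
  carrier := {g | ∃ P Q : MvPolynomial σ ℂ,
    (∀ ζ, eval (φ ζ) Q ≠ 0) ∧ ∀ ζ, g ζ = eval (φ ζ) P / eval (φ ζ) Q}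
  one_mem' := ⟨1, 1, by simp, by simp⟩
  add_mem' := by
    rintro f g ⟨P₁, Q₁, hQ₁, hf⟩ ⟨P₂, Q₂, hQ₂, hg⟩
    refine ⟨P₁ * Q₂ + Q₁ * P₂, Q₁ * Q₂, fun ζ => by simp [hQ₁ ζ, hQ₂ ζ], fun ζ => ?_⟩
    simp [hf, hg, div_add_div _ _ (hQ₁ ζ) (hQ₂ ζ)]
  mul_mem' := by
    rintro f g ⟨P₁, Q₁, hQ₁, hf⟩ ⟨P₂, Q₂, hQ₂, hg⟩
    exact ⟨P₁ * P₂, Q₁ * Q₂, fun ζ => by simp [hQ₁ ζ, hQ₂ ζ],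
      fun ζ => by simp [hf, hg, div_mul_div_comm]⟩
  algebraMap_mem' c := ⟨C c, 1, by simp, by simp⟩

lemma ratEqC_range_of_topologicalClosure_eq_top {K : Type*} [TopologicalSpace K] [CompactSpace K]
    {φ : K → Fin 2 → ℂ} (hφ : Continuous φ) (hdense : (ratFunctionsOf φ).topologicalClosure = ⊤) :
    RatEqC (Set.range φ) := by
  intro f hf ε hε
  let F : C(K, ℂ) := ⟨f ∘ φ, hf.comp_continuous hφ Set.mem_range_self⟩
  have hF : F ∈ closure (ratFunctionsOf φ : Set C(K, ℂ)) := by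
    rw [← Subalgebra.topologicalClosure_coe, hdense]
    trivial
  obtain ⟨g, ⟨P, Q, hQ, hg⟩, hFg⟩ := Metric.mem_closure_iff.1 hF ε hε
  refine ⟨P, Q, Set.forall_mem_range.2 hQ, Set.forall_mem_range.2 fun ζ => ?_⟩
  rw [← hg, ← dist_eq_norm]
  exact (ContinuousMap.dist_apply_le_dist ζ).trans_lt hFg

section RationalHull

variable {X : Set (Fin 2 → ℂ)}

lemma subset_rHull (hX : IsCompact X) : X ⊆ RHull X := by
  intro x hx P Q hQ
  have hQX : ∀ y ∈ X, eval y Q ≠ 0 := fun y hy => hQ y (Or.inl hy)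
  have hcont : ContinuousOn (fun y => ‖eval y P / eval y Q‖) X :=
    ((continuous_eval P).continuousOn.div (continuous_eval Q).continuousOn hQX).norm
  exact le_csSup (hX.bddAbove_image hcont) (Set.mem_image_of_mem _ hx)

lemma notMem_rHull_of_eval_eq_zero (hX : IsCompact X) (hne : X.Nonempty) {w : Fin 2 → ℂ}
    {Q : MvPolynomial (Fin 2) ℂ} (hQw : eval w Q = 0) (hQX : ∀ x ∈ X, eval x Q ≠ 0) :
    w ∉ RHull X := by
  intro hw
  obtain ⟨x₀, hx₀, hmin⟩ := hX.exists_isMinOn hne (continuous_eval Q).norm.continuousOn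
  set δ := ‖eval x₀ Q‖
  have hδ : 0 < δ := norm_pos_iff.2 (hQX x₀ hx₀)
  -- `1 / (Q + δ / 3)` has modulus `3 / δ` at `w` but at most `3 / (2 δ)` on `X`
  set Q' := Q + C ((δ / 3 : ℝ) : ℂ)
  have hQ'X : ∀ x ∈ X, 2 * δ / 3 ≤ ‖eval x Q'‖ := by
    intro x hx
    have := norm_sub_le_norm_add (eval x Q) ((δ / 3 : ℝ) : ℂ)
    rw [norm_real, Real.norm_of_nonneg (by positivity)] at this
    simp only [Q', eval_add, eval_C]
    linarith [isMinOn_iff.1 hmin x hx]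
  have hQ'w : ‖eval w Q'‖ = δ / 3 := by
    simp [Q', hQw, abs_of_pos hδ]
  have hQ' : ∀ x ∈ X ∪ {w}, eval x Q' ≠ 0 := by
    rintro x (hx | rfl)
    · exact norm_pos_iff.1 (by linarith [hQ'X x hx])
    · exact norm_pos_iff.1 (by rw [hQ'w]; positivity)
  have hsup : sSup ((fun x => ‖eval x 1 / eval x Q'‖) '' X) ≤ 3 / (2 * δ) := by
    refine csSup_le (hne.image _) (Set.forall_mem_image.2 fun x hx => ?_)
    rw [map_one, norm_div, norm_one, div_le_div_iff₀ (by linarith [hQ'X x hx]) (by positivity)]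
    linarith [hQ'X x hx]
  have := (hw 1 Q' hQ').trans hsup
  rw [map_one, norm_div, norm_one, hQ'w, one_div_div,
    div_le_div_iff₀ (by positivity) (by positivity)] at this
  linarith

lemma ne_zero_of_approx_bezout {a b g h p q : ℂ} (hbez : a * g + b * h = 1)
    (hp : ‖a * (p - g)‖ < 1 / 2) (hq : ‖b * (q - h)‖ < 1 / 2) : a * p + b * q ≠ 0 := by
  intro h0
  have hsum : a * (p - g) + b * (q - h) = -1 := by linear_combination h0 - hbez
  have := norm_add_le (a * (p - g)) (b * (q - h))
  rw [hsum, norm_neg, norm_one] at this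
  linarith

lemma exists_eval_eq_zero_of_ratEqC (hX : IsCompact X) (hR : RatEqC X) {w : Fin 2 → ℂ}
    (hw : w ∉ X) : ∃ Q : MvPolynomial (Fin 2) ℂ, eval w Q = 0 ∧ ∀ x ∈ X, eval x Q ≠ 0 := by
  set d : (Fin 2 → ℂ) → ℂ := fun x => ((normSq (x 0 - w 0) + normSq (x 1 - w 1) : ℝ) : ℂ)
  have hd : ∀ x ∈ X, d x ≠ 0 := by
    intro x hx h
    rw [ofReal_eq_zero, add_eq_zero_iff_of_nonneg (normSq_nonneg _) (normSq_nonneg _),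
      normSq_eq_zero, normSq_eq_zero, sub_eq_zero, sub_eq_zero] at h
    exact hw (by convert hx using 1; ext i; fin_cases i <;> simp [h.1, h.2])
  set g : Fin 2 → (Fin 2 → ℂ) → ℂ := fun i x => conj (x i - w i) / d x
  have hg : ∀ i, ContinuousOn (g i) X := fun i =>
    ((continuous_conj.comp ((continuous_apply i).sub continuous_const)).continuousOn).div
      (by fun_prop) hd
  have hbez : ∀ x ∈ X, (x 0 - w 0) * g 0 x + (x 1 - w 1) * g 1 x = 1 := by
    intro x hx
    simp only [g, mul_div_assoc', ← add_div, mul_conj, ← ofReal_add]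
    exact div_self (hd x hx)
  obtain ⟨M, hM⟩ := hX.exists_bound_of_continuousOn (f := fun x => x - w) (by fun_prop)
  have hM' : ∀ x ∈ X, ∀ i, ‖x i - w i‖ ≤ |M| + 1 := fun x hx i =>
    (norm_le_pi_norm (x - w) i).trans ((hM x hx).trans ((le_abs_self M).trans (by linarith)))
  have hε : 0 < 1 / (2 * (|M| + 1)) := by positivity
  obtain ⟨P₀, Q₀, hQ₀, hP₀⟩ := hR (g 0) (hg 0) _ hε
  obtain ⟨P₁, Q₁, hQ₁, hP₁⟩ := hR (g 1) (hg 1) _ hε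
  refine ⟨(.X 0 - C (w 0)) * P₀ * Q₁ + (.X 1 - C (w 1)) * P₁ * Q₀, by simp, fun x hx => ?_⟩
  have hclose : ∀ i p, ‖g i x - p‖ < 1 / (2 * (|M| + 1)) →
      ‖(x i - w i) * (p - g i x)‖ < 1 / 2 := by
    intro i p hp
    rw [norm_mul, norm_sub_rev p]
    calc ‖x i - w i‖ * ‖g i x - p‖ ≤ (|M| + 1) * ‖g i x - p‖ := by gcongr; exact hM' x hx i
      _ < (|M| + 1) * (1 / (2 * (|M| + 1))) := by gcongr
      _ = 1 / 2 := by field_simp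
  have := ne_zero_of_approx_bezout (hbez x hx) (hclose 0 _ (hP₀ x hx)) (hclose 1 _ (hP₁ x hx))
  have hQ := mul_ne_zero (mul_ne_zero (hQ₀ x hx) (hQ₁ x hx)) this
  convert hQ using 1
  simp only [eval_add, eval_mul, eval_sub, eval_X, eval_C]
  field_simp [hQ₀ x hx, hQ₁ x hx]

lemma rHull_eq_self_of_ratEqC (hX : IsCompact X) (hne : X.Nonempty) (hR : RatEqC X) :
    RHull X = X := by
  refine (subset_rHull hX).antisymm' fun w hw => ?_
  by_contra hwX
  obtain ⟨Q, hQw, hQX⟩ := exists_eval_eq_zero_of_ratEqC hX hR hwX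
  exact notMem_rHull_of_eval_eq_zero hX hne hQw hQX hw

end RationalHull

def Φ (z : ℂ) : Fin 2 → ℂ := ![z ^ 2, conj z / (1 + conj z)]

lemma one_add_conj_ne_zero {z : ℂ} (hz : ‖z‖ < 1) : 1 + conj z ≠ 0 := by
  intro h
  rw [← norm_conj, show conj z = -1 by linear_combination h, norm_neg, norm_one] at hz
  exact lt_irrefl 1 hz

section Disk

variable {r : ℝ}

lemma one_add_conj_coe_ne_zero (hr : r < 1) (ζ : closedBall (0 : ℂ) r) : 1 + conj (ζ : ℂ) ≠ 0 :=
  one_add_conj_ne_zero ((mem_closedBall_zero_iff.1 ζ.2).trans_lt hr)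

lemma continuous_Φ_disk (hr : r < 1) : Continuous fun ζ : closedBall (0 : ℂ) r => Φ ζ := by
  refine continuous_pi fun i => ?_
  fin_cases i
  · exact continuous_subtype_val.pow 2
  · exact (continuous_conj.comp continuous_subtype_val).div
      (continuous_const.add (continuous_conj.comp continuous_subtype_val))
      (one_add_conj_coe_ne_zero hr)

local notation "ι" => ContinuousMap.restrict (closedBall (0 : ℂ) r) (ContinuousMap.id ℂ)

local notation "𝓡" => ratFunctionsOf fun ζ : closedBall (0 : ℂ) r => Φ ζ

lemma id_sq_mem_ratFunctionsOf_Φ : ι ^ 2 ∈ 𝓡 :=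
  ⟨.X 0, 1, by simp, fun ζ => by simp [Φ]⟩

lemma star_id_mem_ratFunctionsOf_Φ (hr : r < 1) : star ι ∈ 𝓡 := by
  have hden := one_add_conj_coe_ne_zero hr
  -- `z̄ = w / (1 - w)` for `w = z̄ / (1 + z̄)`
  have hinv (ζ : closedBall (0 : ℂ) r) :
      1 - conj (ζ : ℂ) / (1 + conj (ζ : ℂ)) = (1 + conj (ζ : ℂ))⁻¹ := by
    field_simp [hden ζ]
    ring
  refine ⟨.X 1, 1 - .X 1, fun ζ => ?_, fun ζ => ?_⟩
  · simp [Φ, hinv, hden ζ]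
  · simp [Φ, hinv, hden ζ]

lemma id_mem_topologicalClosure_ratFunctionsOf_Φ (hr0 : 0 < r) (hr : r < 1) :
    ι ∈ (𝓡).topologicalClosure := by
  have hnorm (ζ : closedBall (0 : ℂ) r) : ‖(ζ : ℂ)‖ ≤ r := mem_closedBall_zero_iff.1 ζ.2
  set s : closedBall (0 : ℂ) r → ℝ := fun ζ => ‖(ζ : ℂ)‖ ^ 2 / r ^ 2
  have hs (ζ) : s ζ ∈ Set.Icc 0 1 :=
    ⟨by positivity,
      div_le_one_of_le₀ (pow_le_pow_left₀ (norm_nonneg _) (hnorm ζ) 2) (by positivity)⟩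
  have hz : star ι ∈ 𝓡 := star_id_mem_ratFunctionsOf_Φ hr
  have hu : ∃ u ∈ 𝓡, ∀ ζ, u ζ = ι ζ * s ζ := by
    refine ⟨(r ^ 2 : ℂ)⁻¹ • (ι ^ 2 * star ι),
      (𝓡).smul_mem (mul_mem id_sq_mem_ratFunctionsOf_Φ hz) _, fun ζ => ?_⟩
    simp only [s, ContinuousMap.smul_apply, ContinuousMap.mul_apply, ContinuousMap.pow_apply,
      ContinuousMap.star_apply, ContinuousMap.restrict_apply, ContinuousMap.id_apply,
      smul_eq_mul, Complex.star_def]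
    push_cast
    linear_combination ((ζ : ℂ) / r ^ 2) * mul_conj' (ζ : ℂ)
  have hv : ∃ v ∈ 𝓡, ∀ ζ, v ζ = (s ζ : ℂ) ^ 2 := by
    refine ⟨((r ^ 2 : ℂ)⁻¹) ^ 2 • (ι ^ 2 * star ι ^ 2),
      (𝓡).smul_mem (mul_mem id_sq_mem_ratFunctionsOf_Φ (pow_mem hz 2)) _, fun ζ => ?_⟩
    simp only [s, ContinuousMap.smul_apply, ContinuousMap.mul_apply, ContinuousMap.pow_apply,
      ContinuousMap.star_apply, ContinuousMap.restrict_apply, ContinuousMap.id_apply,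
      smul_eq_mul, Complex.star_def]
    push_cast
    linear_combination (((ζ : ℂ) * conj (ζ : ℂ) + ‖(ζ : ℂ)‖ ^ 2) / r ^ 4) * mul_conj' (ζ : ℂ)
  have hf : ∀ ε > 0, ∃ c > 0, ∀ ζ, s ζ < c → ‖ι ζ‖ < ε := by
    intro ε hε
    refine ⟨ε ^ 2 / r ^ 2, by positivity, fun ζ hζ => ?_⟩
    rw [div_lt_div_iff_of_pos_right (by positivity)] at hζ
    exact lt_of_pow_lt_pow_left₀ 2 hε.le hζ
  exact mem_topologicalClosure_of_newtonSign _ hs hu hv hf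

lemma topologicalClosure_ratFunctionsOf_Φ_eq_top (hr0 : 0 < r) (hr : r < 1) :
    (𝓡).topologicalClosure = ⊤ :=
  Subalgebra.topologicalClosure_eq_top_of_id_mem _
    (id_mem_topologicalClosure_ratFunctionsOf_Φ hr0 hr)
    ((𝓡).le_topologicalClosure (star_id_mem_ratFunctionsOf_Φ hr))

end Disk

/-- For `D` a sufficiently small closed disk centered at the origin and
`X = {(z², z̄/(1+z̄)) : z ∈ D} ⊆ ℂ²`, one has `R(X) = C(X)`; in particular `X` is
rationally convex. -/
theorem stmt13 :
    ∃ r₀ : ℝ, 0 < r₀ ∧ ∀ r : ℝ, 0 < r → r ≤ r₀ →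
      ∀ X : Set (Fin 2 → ℂ),
        X = (fun z : ℂ => ![z ^ 2, (starRingEnd ℂ) z / (1 + (starRingEnd ℂ) z)]) ''
            closedBall (0 : ℂ) r →
        RatEqC X ∧ RHull X = X := by
  refine ⟨1 / 2, by norm_num, fun r hr hr₀ X hX => ?_⟩
  have hr1 : r < 1 := by linarith
  have hXΦ : X = Set.range fun ζ : closedBall (0 : ℂ) r => Φ ζ := by
    rw [hX, Set.image_eq_range]
    rfl
  have hR : RatEqC X := hXΦ ▸ ratEqC_range_of_topologicalClosure_eq_top (continuous_Φ_disk hr1)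
    (topologicalClosure_ratFunctionsOf_Φ_eq_top hr hr1)
  have hXc : IsCompact X := hXΦ ▸ isCompact_range (continuous_Φ_disk hr1)
  have hXne : X.Nonempty := hX ▸ (nonempty_closedBall.2 hr.le).image _
  exact ⟨hR, rHull_eq_self_of_ratEqC hXc hXne hR⟩
end
end
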